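/- The radical of the ideal of R_n generated by f_0, f_1, ..., f_{⌊n/2⌋} equals the ideal (x_0, x_1, ..., x_{⌊n/2⌋}) of R_n. -/

import Mathlib

open MvPolynomial Finset
open Fin.NatCast

noncomputable def Dw (K : Type) [CommRing K] (n : ℕ) :
    Derivation K (MvPolynomial (Fin (n + 1)) K) (MvPolynomial (Fin (n + 1)) K) :=
  MvPolynomial.mkDerivation K fun i =>
    if i.1 = 0 then 0 else
      MvPolynomial.X ⟨i.1 - 1, Nat.lt_of_le_of_lt (Nat.sub_le _ _) i.isLt⟩

noncomputable def fpoly (K : Type) [Field K] (n m : ℕ) : MvPolynomial (Fin (n + 1)) K :=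
  ∑ k ∈ Finset.range m,
      ((-1 : K) ^ k) • (X ((k : ℕ) : Fin (n + 1)) * X ((2 * m - k : ℕ) : Fin (n + 1)))
    + (((-1 : K) ^ m) / 2) • (X ((m : ℕ) : Fin (n + 1))) ^ 2

/-!
Let `I = (f_0, …, f_{⌊n/2⌋})`. The ideal `J = (x_0, …, x_{⌊n/2⌋})` is prime, being the kernel of
the substitution killing these variables, and it contains every `f_m`; hence `√I ⊆ J`. Conversely,
`f_m = ((-1)^m / 2) x_m² + ∑_{k<m} ± x_k x_{2m-k}`, so once `x_0, …, x_{m-1} ∈ √I` the square `x_m²`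
lies in `√I` (its coefficient is invertible in characteristic zero), and hence so does `x_m`.
-/

namespace MvPolynomial

variable {σ R : Type*} [CommRing R]

section killVars

variable (s : Set σ) [DecidablePred (· ∈ s)]

noncomputable def killVars : MvPolynomial σ R →ₐ[R] MvPolynomial σ R :=
  aeval fun i => if i ∈ s then 0 else X i

theorem mk_comp_killVars :
    (Ideal.Quotient.mkₐ R (Ideal.span (X '' s : Set (MvPolynomial σ R)))).comp (killVars s) =
      Ideal.Quotient.mkₐ R _ := by
  refine algHom_ext fun i => ?_
  by_cases hi : i ∈ s
  · simpa [killVars, hi, eq_comm (a := (0 : _ ⧸ _)), Ideal.Quotient.eq_zero_iff_mem] using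
      Ideal.subset_span (Set.mem_image_of_mem (X (R := R)) hi)
  · simp [killVars, hi]

theorem ker_killVars :
    RingHom.ker (killVars s : MvPolynomial σ R →ₐ[R] _) = Ideal.span (X '' s) := by
  refine le_antisymm (fun p hp => ?_) ?_
  · have := AlgHom.congr_fun (mk_comp_killVars (R := R) s) p
    rwa [AlgHom.comp_apply, RingHom.mem_ker.mp hp, map_zero, eq_comm, Ideal.Quotient.mkₐ_eq_mk,
      Ideal.Quotient.eq_zero_iff_mem] at this
  · rw [Ideal.span_le]
    rintro _ ⟨i, hi, rfl⟩
    simp [killVars, hi]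

end killVars

theorem isPrime_span_X_image [IsDomain R] (s : Set σ) :
    (Ideal.span (X '' s : Set (MvPolynomial σ R))).IsPrime := by
  classical
  rw [← ker_killVars]
  exact RingHom.ker_isPrime _

end MvPolynomial

section fpoly

variable {K : Type} [Field K] {n m : ℕ} {P : Ideal (MvPolynomial (Fin (n + 1)) K)}

theorem sum_smul_X_mul_X_mem_of_forall_lt (h : ∀ k < m, X ((k : ℕ) : Fin (n + 1)) ∈ P) :
    ∑ k ∈ range m, ((-1 : K) ^ k) •
        (X ((k : ℕ) : Fin (n + 1)) * X ((2 * m - k : ℕ) : Fin (n + 1))) ∈ P :=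
  P.sum_mem fun k hk =>
    Submodule.smul_of_tower_mem _ _ (P.mul_mem_right _ (h k (mem_range.mp hk)))

theorem fpoly_mem_of_forall_le (h : ∀ k ≤ m, X ((k : ℕ) : Fin (n + 1)) ∈ P) :
    fpoly K n m ∈ P :=
  add_mem (sum_smul_X_mul_X_mem_of_forall_lt fun k hk => h k hk.le)
    (Submodule.smul_of_tower_mem _ _ (P.pow_mem_of_mem (h m le_rfl) 2 two_pos))

theorem X_mem_of_fpoly_mem [NeZero (2 : K)] (hP : P.IsRadical) (hf : fpoly K n m ∈ P)
    (h : ∀ k < m, X ((k : ℕ) : Fin (n + 1)) ∈ P) : X ((m : ℕ) : Fin (n + 1)) ∈ P := by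
  have hc : ((-1 : K) ^ m / 2) ≠ 0 := div_ne_zero (pow_ne_zero _ (neg_ne_zero.mpr one_ne_zero))
    two_ne_zero
  have hsmul : ((-1 : K) ^ m / 2) • X ((m : ℕ) : Fin (n + 1)) ^ 2 ∈ P := by
    have := sub_mem hf (sum_smul_X_mul_X_mem_of_forall_lt h)
    rwa [fpoly, add_sub_cancel_left] at this
  have hsq : X ((m : ℕ) : Fin (n + 1)) ^ 2 ∈ P := by
    simpa only [smul_smul, inv_mul_cancel₀ hc, one_smul] using
      Submodule.smul_of_tower_mem _ ((-1 : K) ^ m / 2)⁻¹ hsmul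
  exact hP ⟨2, hsq⟩

end fpoly

theorem stmt4 (K : Type) [Field K] [CharZero K] (n : ℕ) :
    (Ideal.span ({X ((0 : ℕ) : Fin (n + 1))} ∪
        (fpoly K n '' {m : ℕ | 1 ≤ m ∧ m ≤ n / 2}))).radical
      = Ideal.span ((fun i : ℕ => (X ((i : ℕ) : Fin (n + 1)) :
          MvPolynomial (Fin (n + 1)) K)) '' {i : ℕ | i ≤ n / 2}) := by
  rw [← Set.image_image X]
  set J := Ideal.span (X '' ((fun i : ℕ => (i : Fin (n + 1))) '' {i : ℕ | i ≤ n / 2}) :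
    Set (MvPolynomial (Fin (n + 1)) K))
  have hXJ : ∀ i ≤ n / 2, X ((i : ℕ) : Fin (n + 1)) ∈ J := fun i hi =>
    Ideal.subset_span ⟨_, ⟨i, hi, rfl⟩, rfl⟩
  refine le_antisymm ?_ ?_
  · rw [(isPrime_span_X_image _).isRadical.radical_le_iff, Ideal.span_le]
    rintro p (rfl | ⟨m, ⟨-, hm⟩, rfl⟩)
    · exact hXJ 0 (Nat.zero_le _)
    · exact fpoly_mem_of_forall_le fun k hk => hXJ k (hk.trans hm)
  · rw [Ideal.span_le]
    rintro _ ⟨_, ⟨i, hi, rfl⟩, rfl⟩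
    induction i using Nat.strong_induction_on with
    | _ i ih =>
      rcases i.eq_zero_or_pos with rfl | hpos
      · exact Ideal.le_radical (Ideal.subset_span (Or.inl rfl))
      · exact X_mem_of_fpoly_mem (Ideal.radical_isRadical _)
          (Ideal.le_radical (Ideal.subset_span (Or.inr ⟨i, ⟨hpos, hi⟩, rfl⟩)))
          fun k hk => ih k hk (hk.le.trans hi)
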